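/- Let M₁ be a general rotational surface of elliptic type with plane meridians in E⁴₂, and define H(u,v) = ½·(P(z_uu)/E + P(z_vv)/G), where E = g₀(z_u,z_u), G = g₀(z_v,z_v) and P(w) = w − (g₀(w,z_u)/E)·z_u − (g₀(w,z_v)/G)·z_v. Then for all (u,v), H(u,v) = h(u)·n₂(u,v), where n₂(u,v) = (g'·cos(αv), g'·sin(αv), f'·cos(βv), f'·sin(βv))/√(f'² − g'²) and h(u) = [(f'² − g'²)(β²gf' − α²fg') − (β²g² − α²f²)(f''g' − f'g'')] / (2·(f'² − g'²)^{3/2}·(β²g² − α²f²)). -/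

import Mathlib

noncomputable section

/-- The neutral metric `g₀` of `𝔼⁴₂`. -/
def neutralMetric (v w : Fin 4 → ℝ) : ℝ :=
  v 0 * w 0 + v 1 * w 1 - v 2 * w 2 - v 3 * w 3

/-- Parametrization of the general rotational surface of elliptic type. -/
def zEll (α β : ℝ) (f g : ℝ → ℝ) (u v : ℝ) : Fin 4 → ℝ :=
  ![f u * Real.cos (α * v), f u * Real.sin (α * v),
    g u * Real.cos (β * v), g u * Real.sin (β * v)]

def zEll_u (α β : ℝ) (f g : ℝ → ℝ) (u v : ℝ) : Fin 4 → ℝ :=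
  deriv (fun t => zEll α β f g t v) u

def zEll_v (α β : ℝ) (f g : ℝ → ℝ) (u v : ℝ) : Fin 4 → ℝ :=
  deriv (fun t => zEll α β f g u t) v

def zEll_uu (α β : ℝ) (f g : ℝ → ℝ) (u v : ℝ) : Fin 4 → ℝ :=
  deriv (fun t => zEll_u α β f g t v) u

def zEll_vv (α β : ℝ) (f g : ℝ → ℝ) (u v : ℝ) : Fin 4 → ℝ :=
  deriv (fun t => zEll_v α β f g u t) v

/-- `g₀`-orthogonal projection onto the normal space of the surface at `(u,v)`. -/
def projEll (α β : ℝ) (f g : ℝ → ℝ) (u v : ℝ) (w : Fin 4 → ℝ) : Fin 4 → ℝ :=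
  w - (neutralMetric w (zEll_u α β f g u v) /
        neutralMetric (zEll_u α β f g u v) (zEll_u α β f g u v)) • zEll_u α β f g u v
    - (neutralMetric w (zEll_v α β f g u v) /
        neutralMetric (zEll_v α β f g u v) (zEll_v α β f g u v)) • zEll_v α β f g u v

/-- The mean curvature vector of the general rotational surface of elliptic type. -/
def meanCurvEll (α β : ℝ) (f g : ℝ → ℝ) (u v : ℝ) : Fin 4 → ℝ :=
  (1 / 2 : ℝ) •
    ((1 / neutralMetric (zEll_u α β f g u v) (zEll_u α β f g u v)) •
        projEll α β f g u v (zEll_uu α β f g u v)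
      + (1 / neutralMetric (zEll_v α β f g u v) (zEll_v α β f g u v)) •
        projEll α β f g u v (zEll_vv α β f g u v))

/-- The unit timelike normal `n₂` of the general rotational surface of elliptic type. -/
def n2Ell (α β : ℝ) (f g : ℝ → ℝ) (u v : ℝ) : Fin 4 → ℝ :=
  (1 / Real.sqrt ((deriv f u) ^ 2 - (deriv g u) ^ 2)) •
    ![deriv g u * Real.cos (α * v), deriv g u * Real.sin (α * v),
      deriv f u * Real.cos (β * v), deriv f u * Real.sin (β * v)]

/-- The mean curvature scalar `h` of the general rotational surface of elliptic type. -/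
def hEll (α β : ℝ) (f g : ℝ → ℝ) (u : ℝ) : ℝ :=
  (((deriv f u) ^ 2 - (deriv g u) ^ 2) *
      (β ^ 2 * g u * deriv f u - α ^ 2 * f u * deriv g u)
    - (β ^ 2 * (g u) ^ 2 - α ^ 2 * (f u) ^ 2) *
      (deriv (deriv f) u * deriv g u - deriv f u * deriv (deriv g) u)) /
  (2 * ((deriv f u) ^ 2 - (deriv g u) ^ 2) ^ ((3 : ℝ) / 2) *
    (β ^ 2 * (g u) ^ 2 - α ^ 2 * (f u) ^ 2))

/-! ### Auxiliary lemmas -/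

private lemma hasDerivAt_zEll_t (α β : ℝ) (f g : ℝ → ℝ) (t v : ℝ)
    (hf : HasDerivAt f (deriv f t) t) (hg : HasDerivAt g (deriv g t) t) :
    HasDerivAt (fun s => zEll α β f g s v)
      ![deriv f t * Real.cos (α * v), deriv f t * Real.sin (α * v),
        deriv g t * Real.cos (β * v), deriv g t * Real.sin (β * v)] t := by
  rw [hasDerivAt_pi]
  intro i
  fin_cases i <;>
    simp only [zEll, Matrix.cons_val_zero, Matrix.cons_val_one, Matrix.head_cons,
      Matrix.cons_val_two, Matrix.cons_val_three, Matrix.tail_cons, Fin.isValue,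
      Matrix.cons_val', Matrix.empty_val', Matrix.cons_val_fin_one]
  · exact hf.mul_const _
  · exact hf.mul_const _
  · exact hg.mul_const _
  · exact hg.mul_const _

private lemma zEll_u_eq (α β : ℝ) (f g : ℝ → ℝ) (t v : ℝ)
    (hf : HasDerivAt f (deriv f t) t) (hg : HasDerivAt g (deriv g t) t) :
    zEll_u α β f g t v =
      ![deriv f t * Real.cos (α * v), deriv f t * Real.sin (α * v),
        deriv g t * Real.cos (β * v), deriv g t * Real.sin (β * v)] :=
  (hasDerivAt_zEll_t α β f g t v hf hg).deriv

private lemma zEll_uu_eq (α β : ℝ) (f g : ℝ → ℝ) (u v : ℝ)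
    (hev : ∀ᶠ t in nhds u, HasDerivAt f (deriv f t) t ∧ HasDerivAt g (deriv g t) t)
    (hf2 : HasDerivAt (deriv f) (deriv (deriv f) u) u)
    (hg2 : HasDerivAt (deriv g) (deriv (deriv g) u) u) :
    zEll_uu α β f g u v =
      ![deriv (deriv f) u * Real.cos (α * v), deriv (deriv f) u * Real.sin (α * v),
        deriv (deriv g) u * Real.cos (β * v), deriv (deriv g) u * Real.sin (β * v)] := by
  have heq : (fun t => zEll_u α β f g t v) =ᶠ[nhds u]
      (fun t => ![deriv f t * Real.cos (α * v), deriv f t * Real.sin (α * v),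
        deriv g t * Real.cos (β * v), deriv g t * Real.sin (β * v)]) :=
    hev.mono fun t ht => zEll_u_eq α β f g t v ht.1 ht.2
  rw [zEll_uu, heq.deriv_eq]
  refine HasDerivAt.deriv ?_
  rw [hasDerivAt_pi]
  intro i
  fin_cases i <;>
    simp only [Matrix.cons_val_zero, Matrix.cons_val_one, Matrix.head_cons,
      Matrix.cons_val_two, Matrix.cons_val_three, Matrix.tail_cons, Fin.isValue,
      Matrix.cons_val', Matrix.empty_val', Matrix.cons_val_fin_one]
  · exact hf2.mul_const _
  · exact hf2.mul_const _
  · exact hg2.mul_const _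
  · exact hg2.mul_const _

private lemma zEll_v_eq (α β : ℝ) (f g : ℝ → ℝ) (u v : ℝ) :
    zEll_v α β f g u v =
      ![f u * (-Real.sin (α * v) * α), f u * (Real.cos (α * v) * α),
        g u * (-Real.sin (β * v) * β), g u * (Real.cos (β * v) * β)] := by
  refine HasDerivAt.deriv ?_
  have hα1 : HasDerivAt (fun t : ℝ => α * t) α v := by
    simpa using (hasDerivAt_id v).const_mul α
  have hβ1 : HasDerivAt (fun t : ℝ => β * t) β v := by
    simpa using (hasDerivAt_id v).const_mul β
  rw [hasDerivAt_pi]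
  intro i
  fin_cases i <;>
    simp only [zEll, Matrix.cons_val_zero, Matrix.cons_val_one, Matrix.head_cons,
      Matrix.cons_val_two, Matrix.cons_val_three, Matrix.tail_cons, Fin.isValue,
      Matrix.cons_val', Matrix.empty_val', Matrix.cons_val_fin_one]
  · exact hα1.cos.const_mul (f u)
  · exact hα1.sin.const_mul (f u)
  · exact hβ1.cos.const_mul (g u)
  · exact hβ1.sin.const_mul (g u)

private lemma zEll_vv_eq (α β : ℝ) (f g : ℝ → ℝ) (u v : ℝ) :
    zEll_vv α β f g u v =
      ![f u * (-(Real.cos (α * v) * α) * α), f u * (-Real.sin (α * v) * α * α),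
        g u * (-(Real.cos (β * v) * β) * β), g u * (-Real.sin (β * v) * β * β)] := by
  have heq : (fun t => zEll_v α β f g u t) =
      (fun t => ![f u * (-Real.sin (α * t) * α), f u * (Real.cos (α * t) * α),
        g u * (-Real.sin (β * t) * β), g u * (Real.cos (β * t) * β)]) := by
    funext t; exact zEll_v_eq α β f g u t
  rw [zEll_vv, heq]
  refine HasDerivAt.deriv ?_
  have hα1 : HasDerivAt (fun t : ℝ => α * t) α v := by
    simpa using (hasDerivAt_id v).const_mul α
  have hβ1 : HasDerivAt (fun t : ℝ => β * t) β v := by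
    simpa using (hasDerivAt_id v).const_mul β
  rw [hasDerivAt_pi]
  intro i
  fin_cases i <;>
    simp only [Matrix.cons_val_zero, Matrix.cons_val_one, Matrix.head_cons,
      Matrix.cons_val_two, Matrix.cons_val_three, Matrix.tail_cons, Fin.isValue,
      Matrix.cons_val', Matrix.empty_val', Matrix.cons_val_fin_one]
  · exact ((hα1.sin.neg.mul_const α).const_mul (f u))
  · exact ((hα1.cos.mul_const α).const_mul (f u))
  · exact ((hβ1.sin.neg.mul_const β).const_mul (g u))
  · exact ((hβ1.cos.mul_const β).const_mul (g u))

set_option maxHeartbeats 3200000 in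
/-- The mean curvature vector of a general rotational surface of elliptic type with
plane meridians is `H = h·n₂`. -/
theorem mean_curvature_vector_elliptic
    (α β p q : ℝ) (hα : 0 < α) (hβ : 0 < β) (hpq : p < q)
    (f g : ℝ → ℝ)
    (hf : ContDiffOn ℝ (⊤ : ℕ∞) f (Set.Ioo p q)) (hg : ContDiffOn ℝ (⊤ : ℕ∞) g (Set.Ioo p q))
    (h1 : ∀ u ∈ Set.Ioo p q, 0 < (deriv f u) ^ 2 - (deriv g u) ^ 2)
    (h2 : ∀ u ∈ Set.Ioo p q, α ^ 2 * (f u) ^ 2 - β ^ 2 * (g u) ^ 2 < 0) :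
    ∀ u ∈ Set.Ioo p q, ∀ v : ℝ,
      meanCurvEll α β f g u v = hEll α β f g u • n2Ell α β f g u v := by
  intro u hu v
  have hmem : Set.Ioo p q ∈ nhds u := isOpen_Ioo.mem_nhds hu
  have hfd : ∀ t ∈ Set.Ioo p q, HasDerivAt f (deriv f t) t := fun t ht =>
    ((hf.contDiffAt (isOpen_Ioo.mem_nhds ht)).differentiableAt (by simp)).hasDerivAt
  have hgd : ∀ t ∈ Set.Ioo p q, HasDerivAt g (deriv g t) t := fun t ht =>
    ((hg.contDiffAt (isOpen_Ioo.mem_nhds ht)).differentiableAt (by simp)).hasDerivAt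
  have hf' : ContDiffOn ℝ (⊤ : ℕ∞) (deriv f) (Set.Ioo p q) := hf.deriv_of_isOpen isOpen_Ioo (by simp)
  have hg' : ContDiffOn ℝ (⊤ : ℕ∞) (deriv g) (Set.Ioo p q) := hg.deriv_of_isOpen isOpen_Ioo (by simp)
  have hf2 : HasDerivAt (deriv f) (deriv (deriv f) u) u :=
    ((hf'.contDiffAt hmem).differentiableAt (by simp)).hasDerivAt
  have hg2 : HasDerivAt (deriv g) (deriv (deriv g) u) u :=
    ((hg'.contDiffAt hmem).differentiableAt (by simp)).hasDerivAt
  have hev : ∀ᶠ t in nhds u, HasDerivAt f (deriv f t) t ∧ HasDerivAt g (deriv g t) t :=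
    Filter.eventually_of_mem hmem fun t ht => ⟨hfd t ht, hgd t ht⟩
  -- abbreviations
  set c1 := Real.cos (α * v) with hc1
  set s1 := Real.sin (α * v) with hs1
  set c2 := Real.cos (β * v) with hc2
  set s2 := Real.sin (β * v) with hs2
  set F := f u with hF
  set Gv := g u with hGv
  set F' := deriv f u with hF'
  set G' := deriv g u with hG'
  set F'' := deriv (deriv f) u with hF''
  set G'' := deriv (deriv g) u with hG''
  have hzu : zEll_u α β f g u v = ![F' * c1, F' * s1, G' * c2, G' * s2] :=
    zEll_u_eq α β f g u v (hfd u hu) (hgd u hu)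
  have hzv : zEll_v α β f g u v =
      ![F * (-s1 * α), F * (c1 * α), Gv * (-s2 * β), Gv * (c2 * β)] :=
    zEll_v_eq α β f g u v
  have hzuu : zEll_uu α β f g u v = ![F'' * c1, F'' * s1, G'' * c2, G'' * s2] :=
    zEll_uu_eq α β f g u v hev hf2 hg2
  have hzvv : zEll_vv α β f g u v =
      ![F * (-(c1 * α) * α), F * (-s1 * α * α), Gv * (-(c2 * β) * β), Gv * (-s2 * β * β)] :=
    zEll_vv_eq α β f g u v
  have htrig1 : s1 ^ 2 + c1 ^ 2 = 1 := Real.sin_sq_add_cos_sq (α * v)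
  have htrig2 : s2 ^ 2 + c2 ^ 2 = 1 := Real.sin_sq_add_cos_sq (β * v)
  have hEpos : 0 < F' ^ 2 - G' ^ 2 := h1 u hu
  have hDpos : 0 < β ^ 2 * Gv ^ 2 - α ^ 2 * F ^ 2 := by have := h2 u hu; linarith
  -- metric coefficients
  have hE : neutralMetric (![F' * c1, F' * s1, G' * c2, G' * s2])
      (![F' * c1, F' * s1, G' * c2, G' * s2]) = F' ^ 2 - G' ^ 2 := by
    simp only [neutralMetric, Matrix.cons_val_zero, Matrix.cons_val_one, Matrix.head_cons,
      Matrix.cons_val_two, Matrix.cons_val_three, Matrix.tail_cons]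
    linear_combination F' ^ 2 * htrig1 - G' ^ 2 * htrig2
  have hG : neutralMetric (![F * (-s1 * α), F * (c1 * α), Gv * (-s2 * β), Gv * (c2 * β)])
      (![F * (-s1 * α), F * (c1 * α), Gv * (-s2 * β), Gv * (c2 * β)]) =
      α ^ 2 * F ^ 2 - β ^ 2 * Gv ^ 2 := by
    simp only [neutralMetric, Matrix.cons_val_zero, Matrix.cons_val_one, Matrix.head_cons,
      Matrix.cons_val_two, Matrix.cons_val_three, Matrix.tail_cons]
    linear_combination α ^ 2 * F ^ 2 * htrig1 - β ^ 2 * Gv ^ 2 * htrig2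
  have hA : neutralMetric (![F'' * c1, F'' * s1, G'' * c2, G'' * s2])
      (![F' * c1, F' * s1, G' * c2, G' * s2]) = F'' * F' - G'' * G' := by
    simp only [neutralMetric, Matrix.cons_val_zero, Matrix.cons_val_one, Matrix.head_cons,
      Matrix.cons_val_two, Matrix.cons_val_three, Matrix.tail_cons]
    linear_combination F'' * F' * htrig1 - G'' * G' * htrig2
  have hB : neutralMetric (![F'' * c1, F'' * s1, G'' * c2, G'' * s2])
      (![F * (-s1 * α), F * (c1 * α), Gv * (-s2 * β), Gv * (c2 * β)]) = 0 := by
    simp only [neutralMetric, Matrix.cons_val_zero, Matrix.cons_val_one, Matrix.head_cons,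
      Matrix.cons_val_two, Matrix.cons_val_three, Matrix.tail_cons]
    ring
  have hC : neutralMetric
      (![F * (-(c1 * α) * α), F * (-s1 * α * α), Gv * (-(c2 * β) * β), Gv * (-s2 * β * β)])
      (![F' * c1, F' * s1, G' * c2, G' * s2]) =
      -(α ^ 2) * F * F' + β ^ 2 * Gv * G' := by
    simp only [neutralMetric, Matrix.cons_val_zero, Matrix.cons_val_one, Matrix.head_cons,
      Matrix.cons_val_two, Matrix.cons_val_three, Matrix.tail_cons]
    linear_combination (-(α ^ 2) * F * F') * htrig1 + β ^ 2 * Gv * G' * htrig2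
  have hD0 : neutralMetric
      (![F * (-(c1 * α) * α), F * (-s1 * α * α), Gv * (-(c2 * β) * β), Gv * (-s2 * β * β)])
      (![F * (-s1 * α), F * (c1 * α), Gv * (-s2 * β), Gv * (c2 * β)]) = 0 := by
    simp only [neutralMetric, Matrix.cons_val_zero, Matrix.cons_val_one, Matrix.head_cons,
      Matrix.cons_val_two, Matrix.cons_val_three, Matrix.tail_cons]
    ring
  -- the square root
  set s := Real.sqrt (F' ^ 2 - G' ^ 2) with hsdef
  have hs0 : 0 < s := Real.sqrt_pos.mpr hEpos
  have hss : s * s = F' ^ 2 - G' ^ 2 := Real.mul_self_sqrt hEpos.le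
  have hrpow : (F' ^ 2 - G' ^ 2) ^ ((3 : ℝ) / 2) = (F' ^ 2 - G' ^ 2) * s := by
    rw [show (3 : ℝ) / 2 = 1 + 1 / 2 by norm_num, Real.rpow_add hEpos, Real.rpow_one,
      ← Real.sqrt_eq_rpow]
  -- rewrite the right-hand side without square roots
  set N := (F' ^ 2 - G' ^ 2) * (β ^ 2 * Gv * F' - α ^ 2 * F * G')
    - (β ^ 2 * Gv ^ 2 - α ^ 2 * F ^ 2) * (F'' * G' - F' * G'') with hN
  have hRHS : hEll α β f g u • n2Ell α β f g u v =
      (N / (2 * (F' ^ 2 - G' ^ 2) ^ 2 * (β ^ 2 * Gv ^ 2 - α ^ 2 * F ^ 2))) •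
        ![G' * c1, G' * s1, F' * c2, F' * s2] := by
    rw [hEll, n2Ell, smul_smul]
    congr 1
    rw [← hF', ← hG', ← hF, ← hGv, ← hF'', ← hG'', ← hsdef, hrpow, ← hN]
    have hkey : (2 * ((F' ^ 2 - G' ^ 2) * s) * (β ^ 2 * Gv ^ 2 - α ^ 2 * F ^ 2)) * s
        = 2 * (F' ^ 2 - G' ^ 2) ^ 2 * (β ^ 2 * Gv ^ 2 - α ^ 2 * F ^ 2) := by
      linear_combination (2 * (F' ^ 2 - G' ^ 2) * (β ^ 2 * Gv ^ 2 - α ^ 2 * F ^ 2)) * hss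
    rw [div_mul_div_comm, mul_one, hkey]
  rw [hRHS]
  simp only [meanCurvEll, projEll, hzu, hzv, hzuu, hzvv, hE, hG, hA, hB, hC, hD0,
    zero_div, zero_smul, sub_zero, Matrix.smul_cons, Matrix.smul_empty,
    Matrix.cons_sub_cons, Matrix.cons_add_cons, Matrix.empty_sub_empty,
    Matrix.empty_add_empty, smul_eq_mul]
  have hEne : F' ^ 2 - G' ^ 2 ≠ 0 := ne_of_gt hEpos
  have hGne : α ^ 2 * F ^ 2 - β ^ 2 * Gv ^ 2 ≠ 0 := by have := h2 u hu; intro h; nlinarith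
  have hDne : β ^ 2 * Gv ^ 2 - α ^ 2 * F ^ 2 ≠ 0 := ne_of_gt hDpos
  clear hzu hzv hzuu hzvv hE hG hA hB hC hD0 hss hrpow hRHS hf2 hg2 hev hfd hgd
    hf' hg' hmem htrig1 htrig2 hs0 hsdef hc1 hs1 hc2 hs2 hF hGv hF' hG' hF'' hG''
    hf hg h1 h2 hu hα hβ hpq
  clear_value c1 s1 c2 s2 F Gv F' G' F'' G'' s N
  clear s u v f g p q
  subst hN
  refine congrArg₂ Matrix.vecCons ?_ (congrArg₂ Matrix.vecCons ?_
    (congrArg₂ Matrix.vecCons ?_ (congrArg₂ Matrix.vecCons ?_ rfl))) <;>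
    (field_simp; ring)

end
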